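/- arXiv:2401.18055 — 3 statements merged into one kernel-verified Lean document; each statement's English description precedes it below -/
import Mathlib

section
/- Let θ ∈ (0, π) and m ≥ 1 an integer. If sin((j+1)θ)/sin(θ) ≥ 0 for all integers j with 1 ≤ j ≤ m, then θ ≤ π/(m+1), and consequently 2cos(θ) ≥ 2cos(π/(m+1)). -/
open Real

theorem stmt_2 (θ : ℝ) (hθ : 0 < θ) (hθ' : θ < π) (m : ℕ) (hm : 1 ≤ m)
    (h : ∀ j : ℕ, 1 ≤ j → j ≤ m → 0 ≤ sin ((j + 1) * θ) / sin θ) :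
    θ ≤ π / (m + 1) ∧ 2 * cos (π / (m + 1)) ≤ 2 * cos θ := by
  have hsin : 0 < sin θ := Real.sin_pos_of_pos_of_lt_pi hθ hθ'
  have hmain : θ ≤ π / (m + 1) := by
    by_contra hc
    push_neg at hc
    have hm1 : (0:ℝ) < (m:ℝ) + 1 := by positivity
    have hπθ : π / θ < (m:ℝ) + 1 := by
      rw [div_lt_iff₀ hθ]
      have := (div_lt_iff₀ hm1).mp hc
      linarith
    set k : ℕ := ⌊π / θ⌋₊ with hk
    have hk1 : 1 ≤ k := by
      apply Nat.le_floor
      rw [Nat.cast_one, le_div_iff₀ hθ]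
      linarith
    have hkm : k ≤ m := by
      have h2 : π / θ < ((m + 1 : ℕ) : ℝ) := by push_cast; linarith
      have := (Nat.floor_lt (by positivity : (0:ℝ) ≤ π / θ)).mpr h2
      omega
    have hkθ : (k:ℝ) * θ ≤ π := by
      have := Nat.floor_le (by positivity : (0:ℝ) ≤ π / θ)
      calc (k:ℝ) * θ ≤ (π / θ) * θ := by nlinarith
        _ = π := by field_simp
    have hk1θ : π < ((k:ℝ) + 1) * θ := by
      have := Nat.lt_floor_add_one (π / θ)
      calc π = (π / θ) * θ := by field_simp
        _ < ((k:ℝ) + 1) * θ := by nlinarith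
    have hk1θ' : ((k:ℝ) + 1) * θ < 2 * π := by nlinarith
    have hneg : sin (((k:ℝ) + 1) * θ) < 0 := by
      have : sin (((k:ℝ) + 1) * θ - π) > 0 :=
        Real.sin_pos_of_pos_of_lt_pi (by linarith) (by linarith)
      rw [Real.sin_sub_pi] at this
      linarith
    have := h k hk1 hkm
    have hlt : sin (((k:ℝ) + 1) * θ) / sin θ < 0 := div_neg_of_neg_of_pos hneg hsin
    push_cast at this
    linarith
  refine ⟨hmain, ?_⟩
  have : cos θ ≥ cos (π / (m + 1)) := by
    apply Real.cos_le_cos_of_nonneg_of_le_pi (le_of_lt hθ) ?_ hmain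
    have h1 : (1:ℝ) ≤ (m:ℝ) + 1 := by have : (0:ℝ) ≤ (m:ℝ) := Nat.cast_nonneg m; linarith
    calc π / ((m:ℝ) + 1) ≤ π / 1 := by
          apply div_le_div_of_nonneg_left pi_pos.le (by norm_num) h1
      _ = π := by ring
  linarith
end

section
/- Let f, g, h : ℕ → ℝ be arithmetic functions with f = g * h (Dirichlet convolution, i.e. f(n) = Σ_{d|n} g(d) h(n/d)), g(1) = 1, and g(d) ≥ 0 for all d ≥ 1. If for every real t with 1 ≤ t ≤ X the partial sum Σ_{m ≤ t} h(m) is ≥ 0, then Σ_{n ≤ X} f(n) ≥ Σ_{n ≤ X} h(n). -/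
theorem stmt_5 (f g h : ℕ → ℝ) (X : ℝ) (hX : 1 ≤ X)
    (hconv : ∀ n : ℕ, 0 < n → f n = ∑ d ∈ n.divisors, g d * h (n / d))
    (hg1 : g 1 = 1) (hg : ∀ d : ℕ, 1 ≤ d → 0 ≤ g d)
    (hpos : ∀ t : ℝ, 1 ≤ t → t ≤ X → 0 ≤ ∑ m ∈ Finset.Icc 1 ⌊t⌋₊, h m) :
    ∑ n ∈ Finset.Icc 1 ⌊X⌋₊, h n ≤ ∑ n ∈ Finset.Icc 1 ⌊X⌋₊, f n := by
  set N := ⌊X⌋₊ with hN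
  have hN1 : 1 ≤ N := Nat.one_le_floor_iff X |>.mpr hX
  have hNX : (N : ℝ) ≤ X := Nat.floor_le (by linarith)
  have key : ∑ n ∈ Finset.Icc 1 N, f n
      = ∑ d ∈ Finset.Icc 1 N, g d * ∑ m ∈ Finset.Icc 1 (N / d), h m := by
    calc ∑ n ∈ Finset.Icc 1 N, f n
        = ∑ n ∈ Finset.Icc 1 N, ∑ p ∈ n.divisorsAntidiagonal, g p.1 * h p.2 := by
          refine Finset.sum_congr rfl fun n hn => ?_
          have hn1 : 1 ≤ n := (Finset.mem_Icc.mp hn).1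
          rw [hconv n hn1, Nat.sum_divisorsAntidiagonal (fun d m => g d * h m)]
      _ = ∑ d ∈ Finset.Icc 1 N, ∑ m ∈ Finset.Icc 1 (N / d), g d * h m := by
          rw [Finset.sum_sigma', Finset.sum_sigma']
          refine Finset.sum_nbij' (fun p => ⟨p.2.1, p.2.2⟩)
            (fun p => ⟨p.1 * p.2, (p.1, p.2)⟩) ?_ ?_ ?_ ?_ ?_
          · rintro ⟨n, d, m⟩ hp
            simp only [Finset.mem_sigma, Finset.mem_Icc, Nat.mem_divisorsAntidiagonal] at hp ⊢
            obtain ⟨⟨hn1, hnN⟩, hdm, hn0⟩ := hp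
            have hd : 1 ≤ d := Nat.one_le_iff_ne_zero.mpr (by rintro rfl; simp at hdm; omega)
            have hm : 1 ≤ m := Nat.one_le_iff_ne_zero.mpr (by rintro rfl; simp at hdm; omega)
            refine ⟨⟨hd, ?_⟩, hm, ?_⟩
            · calc d ≤ d * m := Nat.le_mul_of_pos_right d hm
                _ = n := hdm
                _ ≤ N := hnN
            · exact Nat.le_div_iff_mul_le hd |>.mpr (by rw [Nat.mul_comm]; omega)
          · rintro ⟨d, m⟩ hp
            simp only [Finset.mem_sigma, Finset.mem_Icc, Nat.mem_divisorsAntidiagonal] at hp ⊢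
            obtain ⟨⟨hd1, hdN⟩, hm1, hmN⟩ := hp
            have := (Nat.le_div_iff_mul_le hd1).mp hmN
            refine ⟨⟨Nat.one_le_iff_ne_zero.mpr (by positivity), by nlinarith⟩, trivial, by positivity⟩
          · rintro ⟨n, d, m⟩ hp
            simp only [Finset.mem_sigma, Nat.mem_divisorsAntidiagonal] at hp
            simp [hp.2.1]
          · rintro ⟨d, m⟩ hp; rfl
          · rintro ⟨n, d, m⟩ hp; rfl
      _ = _ := by
          refine Finset.sum_congr rfl fun d hd => ?_
          rw [Finset.mul_sum]
  rw [key]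
  have h1 : g 1 * ∑ m ∈ Finset.Icc 1 (N / 1), h m = ∑ n ∈ Finset.Icc 1 N, h n := by
    simp [hg1]
  calc ∑ n ∈ Finset.Icc 1 N, h n
      = g 1 * ∑ m ∈ Finset.Icc 1 (N / 1), h m := h1.symm
    _ ≤ ∑ d ∈ Finset.Icc 1 N, g d * ∑ m ∈ Finset.Icc 1 (N / d), h m := by
        refine Finset.single_le_sum (f := fun d => g d * ∑ m ∈ Finset.Icc 1 (N / d), h m)
          (fun d hd => ?_) (Finset.mem_Icc.mpr ⟨le_refl 1, hN1⟩)
        have hd1 : 1 ≤ d := (Finset.mem_Icc.mp hd).1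
        have hdN : d ≤ N := (Finset.mem_Icc.mp hd).2
        have hdiv1 : 1 ≤ N / d := Nat.one_le_div_iff (by omega) |>.mpr hdN
        have hinner : 0 ≤ ∑ m ∈ Finset.Icc 1 (N / d), h m := by
          have := hpos ((N / d : ℕ) : ℝ) (by exact_mod_cast hdiv1)
            (le_trans (by exact_mod_cast Nat.div_le_self N d) hNX)
          simpa using this
        exact mul_nonneg (hg d hd1) hinner
end

section
/- Let λ : ℕ → ℝ be multiplicative with λ(p) ≥ 0 for all primes p ≤ Y, and suppose additionally that for every prime p ≤ Y^{1/m} and every 1 ≤ j ≤ m, λ(p^j) ≥ 0, where λ(p^j) = sin((j+1)θ_p)/sin(θ_p) for some θ_p ∈ (0, π). Then for every prime p ≤ Y, writing m_p = ⌊log Y / log p⌋, one has λ(p) ≥ 2cos(π/(m_p + 1)). -/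
/-!
Write `λ(p) = 2 cos θ_p`. Since `sin θ_p > 0`, the hypothesis says `sin (k θ_p) ≥ 0` for
`k = 1, …, m_p + 1`. If `θ_p > π / (m_p + 1)`, the multiples of `θ_p` advance by less than
`π`, so the first one beyond `π`, namely `k = ⌊π / θ_p⌋ + 1 ≤ m_p + 1`, lands in `(π, 2π)`
where the sine is negative. Hence `θ_p ≤ π / (m_p + 1)`, and `cos` is decreasing on `[0, π]`.
-/

open Real

lemma Real.sin_neg_of_pi_lt_of_lt_two_pi {x : ℝ} (h₁ : π < x) (h₂ : x < 2 * π) :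
    sin x < 0 := by
  rw [← sin_sub_two_pi]
  exact sin_neg_of_neg_of_neg_pi_lt (by linarith) (by linarith)

lemma Real.exists_sin_nat_mul_neg {θ : ℝ} {n : ℕ} (hθ : π / (n + 1) < θ) (hθπ : θ < π) :
    ∃ k ≤ n + 1, sin (k * θ) < 0 := by
  have hθ₀ : 0 < θ := lt_trans (by positivity) hθ
  set x := π / θ
  have hx : 0 ≤ x := by positivity
  refine ⟨⌊x⌋₊ + 1, ?_, sin_neg_of_pi_lt_of_lt_two_pi ?_ ?_⟩
  · have hxn : x < n + 1 := by
      rw [div_lt_iff₀ hθ₀]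
      rw [div_lt_iff₀ (by positivity)] at hθ
      linarith
    have : ⌊x⌋₊ < n + 1 := (Nat.floor_lt hx).mpr (by exact_mod_cast hxn)
    omega
  · push_cast
    exact (div_lt_iff₀ hθ₀).mp (Nat.lt_floor_add_one x)
  · have : (⌊x⌋₊ : ℝ) * θ ≤ π := (le_div_iff₀ hθ₀).mp (Nat.floor_le hx)
    push_cast
    linarith

lemma Real.le_pi_div_of_sin_nat_mul_nonneg {θ : ℝ} {n : ℕ} (hθπ : θ < π)
    (h : ∀ k ≤ n + 1, 0 ≤ sin (k * θ)) : θ ≤ π / (n + 1) := by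
  by_contra! hθ
  obtain ⟨k, hk, hneg⟩ := exists_sin_nat_mul_neg hθ hθπ
  exact (h k hk).not_gt hneg

lemma Real.pow_le_of_le_floor_log_div_log {b Y : ℝ} (hb : 1 < b) (hY : 1 ≤ Y) {j : ℕ}
    (hj : j ≤ ⌊log Y / log b⌋₊) : b ^ j ≤ Y := by
  have hlogb : 0 < log b := log_pos hb
  rw [Nat.le_floor_iff (div_nonneg (log_nonneg hY) hlogb.le), le_div_iff₀ hlogb] at hj
  exact (pow_le_iff_le_log (by linarith) (by linarith)).mpr hj

theorem stmt_18_general (Y : ℝ)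
    (lam : ℕ → ℝ)
    (θ : ℕ → ℝ) (hθ : ∀ p : ℕ, p.Prime → 0 < θ p ∧ θ p < π)
    (hval : ∀ p : ℕ, p.Prime → ∀ j : ℕ,
      lam (p ^ j) = sin ((j + 1) * θ p) / sin (θ p))
    (hpos : ∀ p : ℕ, p.Prime → ∀ j : ℕ, 1 ≤ j → ((p : ℝ)) ^ j ≤ Y → 0 ≤ lam (p ^ j)) :
    ∀ p : ℕ, p.Prime → (p : ℝ) ≤ Y →
      2 * cos (π / (⌊Real.log Y / Real.log p⌋₊ + 1)) ≤ lam p := by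
  intro p hp hpY
  obtain ⟨hθ₀, hθπ⟩ := hθ p hp
  have hsin : 0 < sin (θ p) := sin_pos_of_pos_of_lt_pi hθ₀ hθπ
  have hp₁ : (1 : ℝ) < p := by exact_mod_cast hp.one_lt
  have hsin_mul : ∀ k ≤ ⌊log Y / log p⌋₊ + 1, 0 ≤ sin (k * θ p) := by
    rintro (_ | _ | j) hk
    · simp
    · simpa using hsin.le
    · have hlam := hpos p hp (j + 1) (by omega)
        (pow_le_of_le_floor_log_div_log hp₁ (by linarith) (by omega))
      rw [hval p hp, le_div_iff₀ hsin, zero_mul] at hlam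
      simpa [add_assoc, one_add_one_eq_two] using hlam
  have hlam_p : lam p = 2 * cos (θ p) := by
    have h := hval p hp 1
    rw [pow_one] at h
    rw [h, Nat.cast_one, one_add_one_eq_two, sin_two_mul,
      mul_assoc, mul_div_assoc, mul_div_cancel_left₀ _ hsin.ne']
  rw [hlam_p]
  have hdiv_le_pi : π / (⌊log Y / log p⌋₊ + 1) ≤ π :=
    div_le_self pi_pos.le (by linarith [Nat.cast_nonneg (α := ℝ) ⌊log Y / log p⌋₊])
  gcongr 2 * ?_
  exact cos_le_cos_of_nonneg_of_le_pi hθ₀.le hdiv_le_pi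
    (le_pi_div_of_sin_nat_mul_nonneg hθπ hsin_mul)

theorem stmt_18 (Y : ℝ) (hY : 2 ≤ Y)
    (lam : ℕ → ℝ) (hlam1 : lam 1 = 1)
    (hlammul : ∀ a b : ℕ, Nat.Coprime a b → lam (a * b) = lam a * lam b)
    (θ : ℕ → ℝ) (hθ : ∀ p : ℕ, p.Prime → 0 < θ p ∧ θ p < π)
    (hval : ∀ p : ℕ, p.Prime → ∀ j : ℕ,
      lam (p ^ j) = sin ((j + 1) * θ p) / sin (θ p))
    (hpos : ∀ p : ℕ, p.Prime → ∀ j : ℕ, 1 ≤ j → ((p : ℝ)) ^ j ≤ Y → 0 ≤ lam (p ^ j)) :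
    ∀ p : ℕ, p.Prime → (p : ℝ) ≤ Y →
      2 * cos (π / (⌊Real.log Y / Real.log p⌋₊ + 1)) ≤ lam p :=
  stmt_18_general Y lam θ hθ hval hpos
end
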